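/- arXiv:1801.10030 — 2 statements merged into one kernel-verified Lean document; each statement's English description precedes it below -/
import Mathlib

section
/- Let $0<a$ and let $f:[0,2a]\to\mathbb{R}$ be absolutely continuous (e.g. $f\in C^1([0,2a])$). Then $\int_0^a f(t)^2\,dt \le 4\int_a^{2a} f(t)^2\,dt + 4\int_0^{2a} t^2 f'(t)^2\,dt$. -/
/-!
Integrating `((t - a) f²)' = f² + 2 (t - a) f f'` over `[a, b]` and applying Young's inequality to
the cross term bounds `∫_a^b f²` by `f(b)²` and the weighted energy; integrating
`((b - t) f²)'` instead bounds `f(a)²` by `∫_a^b f²` and the energy with weight `(b - t)²`.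
On `[0, a]` and `[a, 2a]` the first bound controls `∫_0^a f²` by `f(a)²`, the second controls
`f(a)²` by the data on `[a, 2a]`, where `(2a - t)² ≤ t²`.
-/

open Set intervalIntegral
open MeasureTheory (volume)

section

variable {f f' : ℝ → ℝ} {a b : ℝ}

theorem integral_deriv_affine_mul_sq_eq (c d : ℝ)
    (hderiv : ∀ t ∈ uIcc a b, HasDerivAt f (f' t) t) (hcont : ContinuousOn f' (uIcc a b)) :
    ∫ t in a..b, c * f t ^ 2 + (c * t + d) * (2 * f t * f' t)
      = (c * b + d) * f b ^ 2 - (c * a + d) * f a ^ 2 := by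
  have hf : ContinuousOn f (uIcc a b) := HasDerivAt.continuousOn hderiv
  exact integral_deriv_mul_eq_sub
    (fun t _ => by simpa using ((hasDerivAt_id t).const_mul c).add_const d)
    (fun t ht => by simpa [mul_comm, mul_assoc] using (hderiv t ht).fun_pow 2)
    intervalIntegrable_const (ContinuousOn.intervalIntegrable (by fun_prop))

theorem integral_sq_le_of_hasDerivAt (hab : a ≤ b)
    (hderiv : ∀ t ∈ Icc a b, HasDerivAt f (f' t) t) (hcont : ContinuousOn f' (Icc a b)) :
    ∫ t in a..b, f t ^ 2 ≤ 2 * (b - a) * f b ^ 2 + 4 * ∫ t in a..b, (t - a) ^ 2 * f' t ^ 2 := by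
  rw [← uIcc_of_le hab] at hderiv hcont
  have hf : ContinuousOn f (uIcc a b) := HasDerivAt.continuousOn hderiv
  have hf2 : IntervalIntegrable (fun t => f t ^ 2) volume a b :=
    ContinuousOn.intervalIntegrable (by fun_prop)
  have hw : IntervalIntegrable (fun t => (t - a) ^ 2 * f' t ^ 2) volume a b :=
    ContinuousOn.intervalIntegrable (by fun_prop)
  have hid := integral_deriv_affine_mul_sq_eq 1 (-a) hderiv hcont
  have hyoung : ∫ t in a..b, (f t ^ 2 / 2 - 2 * ((t - a) ^ 2 * f' t ^ 2))
      ≤ ∫ t in a..b, 1 * f t ^ 2 + (1 * t + -a) * (2 * f t * f' t) := by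
    refine integral_mono_on hab ?_ ?_ fun t _ => ?_
    · exact (hf2.div_const 2).sub (hw.const_mul 2)
    · exact ContinuousOn.intervalIntegrable (by fun_prop)
    · nlinarith [sq_nonneg (f t + 2 * (t - a) * f' t)]
  rw [hid, integral_sub (hf2.div_const 2) (hw.const_mul 2),
    integral_div, integral_const_mul] at hyoung
  linarith

theorem sq_le_integral_of_hasDerivAt (hab : a ≤ b)
    (hderiv : ∀ t ∈ Icc a b, HasDerivAt f (f' t) t) (hcont : ContinuousOn f' (Icc a b)) :
    (b - a) * f a ^ 2 ≤ 2 * (∫ t in a..b, f t ^ 2) + ∫ t in a..b, (b - t) ^ 2 * f' t ^ 2 := by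
  rw [← uIcc_of_le hab] at hderiv hcont
  have hf : ContinuousOn f (uIcc a b) := HasDerivAt.continuousOn hderiv
  have hf2 : IntervalIntegrable (fun t => f t ^ 2) volume a b :=
    ContinuousOn.intervalIntegrable (by fun_prop)
  have hw : IntervalIntegrable (fun t => (b - t) ^ 2 * f' t ^ 2) volume a b :=
    ContinuousOn.intervalIntegrable (by fun_prop)
  have hid := integral_deriv_affine_mul_sq_eq (-1) b hderiv hcont
  have hyoung : ∫ t in a..b, (-2 * f t ^ 2 - (b - t) ^ 2 * f' t ^ 2)
      ≤ ∫ t in a..b, -1 * f t ^ 2 + (-1 * t + b) * (2 * f t * f' t) := by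
    refine integral_mono_on hab ?_ ?_ fun t _ => ?_
    · exact (hf2.const_mul (-2)).sub hw
    · exact ContinuousOn.intervalIntegrable (by fun_prop)
    · nlinarith [sq_nonneg (f t + (b - t) * f' t)]
  rw [hid, integral_sub (hf2.const_mul (-2)) hw, integral_const_mul] at hyoung
  linarith

end

/-- Kondratiev–Oleinik 1D weighted estimate: for `f` absolutely continuous (here `C¹`)
on `[0, 2a]`, `∫_0^a f² ≤ 4 ∫_a^{2a} f² + 4 ∫_0^{2a} t² f'(t)² dt`. -/
theorem kondratiev_oleinik_weighted (a : ℝ) (ha : 0 < a) (f f' : ℝ → ℝ)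
    (hderiv : ∀ t ∈ Set.Icc (0 : ℝ) (2 * a), HasDerivAt f (f' t) t)
    (hcont : ContinuousOn f' (Set.Icc (0 : ℝ) (2 * a))) :
    (∫ t in (0 : ℝ)..a, f t ^ 2) ≤
      4 * (∫ t in a..(2 * a), f t ^ 2) + 4 * ∫ t in (0 : ℝ)..(2 * a), t ^ 2 * f' t ^ 2 := by
  have hleft : Icc 0 a ⊆ Icc 0 (2 * a) := Icc_subset_Icc le_rfl (by linarith)
  have hright : Icc a (2 * a) ⊆ Icc 0 (2 * a) := Icc_subset_Icc ha.le le_rfl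
  have hinner := integral_sq_le_of_hasDerivAt ha.le (fun t ht => hderiv t (hleft ht))
    (hcont.mono hleft)
  have hcontR : ContinuousOn f' (Icc a (2 * a)) := hcont.mono hright
  have hendpoint := sq_le_integral_of_hasDerivAt (by linarith) (fun t ht => hderiv t (hright ht))
    hcontR
  have henergy : ContinuousOn (fun t => t ^ 2 * f' t ^ 2) (Icc 0 (2 * a)) := by fun_prop
  have hweight : ∫ t in a..(2 * a), (2 * a - t) ^ 2 * f' t ^ 2
      ≤ ∫ t in a..(2 * a), t ^ 2 * f' t ^ 2 := by
    refine integral_mono_on (by linarith) ?_ ?_ fun t ht => ?_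
    · exact ContinuousOn.intervalIntegrable_of_Icc (by linarith) (by fun_prop)
    · exact (henergy.mono hright).intervalIntegrable_of_Icc (by linarith)
    · exact mul_le_mul_of_nonneg_right (by nlinarith [ht.1, ht.2]) (sq_nonneg _)
  have hsplit := integral_add_adjacent_intervals (μ := volume)
    ((henergy.mono hleft).intervalIntegrable_of_Icc ha.le)
    ((henergy.mono hright).intervalIntegrable_of_Icc (by linarith))
  have hnonneg : 0 ≤ ∫ t in a..(2 * a), t ^ 2 * f' t ^ 2 :=
    integral_nonneg (by linarith) fun t _ => by positivity
  simp only [sub_zero] at hinner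
  linarith
end

section
/- Let $R_b=(0,h)\times(0,b)$ with $b>3h$, let $w\in C^2(\overline{R_b})$ be harmonic, and let $\varphi:[0,b]\to[0,1]$ be smooth with $\varphi=1$ on $[z,b-z]$ and $|\varphi'|\le 2/z$ on $[0,b]$, where $z\in(h,b/2)$. Then for every $\epsilon>0$, with $R_{h/4,z}=(h/4,3h/4)\times(z,b-z)$, $R_z^{bot}=(0,h)\times(0,z)$, $R_z^{top}=(0,h)\times(b-z,b)$: $\int_{R_{h/4,z}}|\nabla w|^2 \le \frac{4}{h}\int_{R_b}|w\,w_x| + \frac{1}{\epsilon^2 z^2}\int_{R_z^{bot}\cup R_z^{top}} w^2 + \epsilon^2\int_{R_z^{bot}\cup R_z^{top}} w_y^2$. -/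
open MeasureTheory Set

/-- Partial derivative in the first (`x`) variable. -/
noncomputable def dX (f : ℝ × ℝ → ℝ) (p : ℝ × ℝ) : ℝ := fderiv ℝ f p (1, 0)

/-- Partial derivative in the second (`y`) variable. -/
noncomputable def dY (f : ℝ × ℝ → ℝ) (p : ℝ × ℝ) : ℝ := fderiv ℝ f p (0, 1)

/-- `w` is harmonic on `s ⊆ ℝ²`. -/
def HarmonicOn2 (w : ℝ × ℝ → ℝ) (s : Set (ℝ × ℝ)) : Prop :=
  ∀ p ∈ s, dX (dX w) p + dY (dY w) p = 0

/-- Square of the `L²` norm of `f` over `s`. -/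
noncomputable def L2sq (f : ℝ × ℝ → ℝ) (s : Set (ℝ × ℝ)) : ℝ := ∫ p in s, f p ^ 2

/-- The open rectangle `(0,h) × (0,b)`. -/
def Rect (h b : ℝ) : Set (ℝ × ℝ) := Ioo (0 : ℝ) h ×ˢ Ioo (0 : ℝ) b

lemma aux_bdd_int {α : Type*} [MeasureSpace α] {f : α → ℝ} {s : Set α} (hs : MeasurableSet s)
    (hvol : volume s ≠ ⊤) (hm : AEStronglyMeasurable f (volume.restrict s)) {M : ℝ}
    (hb : ∀ p ∈ s, |f p| ≤ M) : IntegrableOn f s := by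
  refine ⟨hm, HasFiniteIntegral.restrict_of_bounded (C := M) hvol.lt_top ?_⟩
  exact (ae_restrict_iff' hs).2 (Filter.Eventually.of_forall fun p hp => by
    simpa [Real.norm_eq_abs] using hb p hp)

lemma aux_avg {f : ℝ → ℝ} {a b C : ℝ} (hab : a < b) (hint : IntegrableOn f (Ioo a b))
    (h : ∫ t in Ioo a b, f t ≤ C * (b - a)) : ∃ t ∈ Ioo a b, f t ≤ C := by
  by_contra hc
  push_neg at hc
  have hmeas : MeasurableSet (Ioo a b) := measurableSet_Ioo
  have hCint : IntegrableOn (fun _ : ℝ => C) (Ioo a b) :=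
    integrableOn_const (by simp [Real.volume_Ioo])
  have hpos : 0 < ∫ t in Ioo a b, (f t - C) := by
    refine (setIntegral_pos_iff_support_of_nonneg_ae
      ((ae_restrict_iff' hmeas).2 (Filter.Eventually.of_forall fun t ht => by
        have := hc t ht; simp only [Pi.zero_apply, Pi.sub_apply]; linarith))
      (hint.sub hCint)).2 ?_
    have hsub : Ioo a b ⊆ Function.support (f - fun _ => C) ∩ Ioo a b := fun t ht =>
      ⟨by have := hc t ht
          simp only [Function.mem_support, Pi.sub_apply]
          intro hx; linarith, ht⟩
    have h1 : (0 : ENNReal) < volume (Ioo a b) := by simp [Real.volume_Ioo]; linarith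
    exact lt_of_lt_of_le h1 (measure_mono hsub)
  have hC : ∫ t in Ioo a b, (C : ℝ) = C * (b - a) := by
    simp [Real.volume_Ioo, ENNReal.toReal_ofReal (le_of_lt (sub_pos.2 hab))]
    rw [max_eq_left (sub_pos.2 hab).le]; ring
  rw [integral_sub hint hCint, hC] at hpos
  linarith

lemma aux_reg {h b : ℝ} (hh : 0 < h) (hb : 0 < b) {w : ℝ × ℝ → ℝ}
    (hw : ContDiffOn ℝ 2 w (closure (Rect h b))) :
    ∃ M : ℝ, 0 ≤ M ∧
      ContinuousOn w (Rect h b) ∧ ContinuousOn (dX w) (Rect h b) ∧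
      ContinuousOn (dY w) (Rect h b) ∧ ContinuousOn (dX (dX w)) (Rect h b) ∧
      ContinuousOn (dY (dY w)) (Rect h b) ∧
      (∀ p ∈ Rect h b, DifferentiableAt ℝ w p ∧ DifferentiableAt ℝ (dX w) p ∧
        DifferentiableAt ℝ (dY w) p) ∧
      (∀ p ∈ Rect h b, |w p| ≤ M ∧ |dX w p| ≤ M ∧ |dY w p| ≤ M ∧
        |dX (dX w) p| ≤ M ∧ |dY (dY w) p| ≤ M) := by
  have hUopen : IsOpen (Rect h b) := isOpen_Ioo.prod isOpen_Ioo
  have hUsub : Rect h b ⊆ closure (Rect h b) := subset_closure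
  have hCl : closure (Rect h b) = Icc 0 h ×ˢ Icc 0 b := by
    rw [Rect, closure_prod_eq, closure_Ioo hh.ne, closure_Ioo hb.ne]
  have hComp : IsCompact (closure (Rect h b)) := by
    rw [hCl]; exact isCompact_Icc.prod isCompact_Icc
  have hUD : UniqueDiffOn ℝ (closure (Rect h b)) := by
    rw [hCl]; exact (uniqueDiffOn_Icc hh).prod (uniqueDiffOn_Icc hb)
  have hnhds : ∀ p ∈ Rect h b, closure (Rect h b) ∈ nhds p := fun p hp =>
    Filter.mem_of_superset (hUopen.mem_nhds hp) subset_closure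
  set C := closure (Rect h b) with hC
  set g1 := fderivWithin ℝ w C with hg1
  set g2 := fderivWithin ℝ g1 C with hg2
  have hg1cd : ContDiffOn ℝ 1 g1 C := hw.fderivWithin hUD (by norm_num)
  have hg1cont : ContinuousOn g1 C := hg1cd.continuousOn
  have hg2cont : ContinuousOn g2 C := hg1cd.continuousOn_fderivWithin hUD le_rfl
  have key : ∀ p ∈ Rect h b, fderiv ℝ w p = g1 p ∧ DifferentiableAt ℝ w p ∧
      DifferentiableAt ℝ g1 p ∧ fderiv ℝ g1 p = g2 p := by
    intro p hp
    have hmem : p ∈ C := hUsub hp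
    have hd : DifferentiableWithinAt ℝ w C p := (hw.differentiableOn two_ne_zero) p hmem
    have hd1 : DifferentiableWithinAt ℝ g1 C p := (hg1cd.differentiableOn one_ne_zero) p hmem
    exact ⟨(fderivWithin_of_mem_nhds (hnhds p hp)).symm, hd.differentiableAt (hnhds p hp),
      hd1.differentiableAt (hnhds p hp), (fderivWithin_of_mem_nhds (hnhds p hp)).symm⟩
  -- HasFDerivAt facts for dX w / dY w and values of second derivatives
  have hder : ∀ v : ℝ × ℝ, ∀ p ∈ Rect h b,
      HasFDerivAt (fun q => fderiv ℝ w q v)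
        ((ContinuousLinearMap.apply ℝ ℝ v).comp (g2 p)) p ∧
      fderiv ℝ (fun q => fderiv ℝ w q v) p v = g2 p v v := by
    intro v p hp
    obtain ⟨e1, hDA, hDA1, e2⟩ := key p hp
    have hL : HasFDerivAt (fun q => g1 q v)
        ((ContinuousLinearMap.apply ℝ ℝ v).comp (g2 p)) p :=
      (ContinuousLinearMap.apply ℝ ℝ v).hasFDerivAt.comp p (e2 ▸ hDA1.hasFDerivAt)
    have heq : (fun q => fderiv ℝ w q v) =ᶠ[nhds p] (fun q => g1 q v) :=
      Filter.eventually_of_mem (hUopen.mem_nhds hp) (fun q hq => congrArg (fun L => L v) (key q hq).1)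
    have hF : HasFDerivAt (fun q => fderiv ℝ w q v)
        ((ContinuousLinearMap.apply ℝ ℝ v).comp (g2 p)) p := hL.congr_of_eventuallyEq heq
    exact ⟨hF, by rw [hF.fderiv]; rfl⟩
  obtain ⟨K0, hK0⟩ := hComp.exists_bound_of_continuousOn (hw.continuousOn)
  obtain ⟨K1, hK1⟩ := hComp.exists_bound_of_continuousOn hg1cont
  obtain ⟨K2, hK2⟩ := hComp.exists_bound_of_continuousOn (E := ℝ × ℝ →L[ℝ] ℝ × ℝ →L[ℝ] ℝ) hg2cont
  have hnv : ∀ v : ℝ × ℝ, ‖v‖ ≤ 1 → ∀ p ∈ Rect h b,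
      |dX w p| ≤ K1 → True := fun _ _ _ _ _ => trivial
  refine ⟨max 0 (max K0 (max K1 K2)), le_max_left _ _, ?_, ?_, ?_, ?_, ?_, ?_, ?_⟩
  · exact hw.continuousOn.mono hUsub
  · exact ContinuousOn.congr ((hg1cont.mono hUsub).clm_apply continuousOn_const)
      (fun q hq => congrArg (fun L => L (1,0)) (key q hq).1)
  · exact ContinuousOn.congr ((hg1cont.mono hUsub).clm_apply continuousOn_const)
      (fun q hq => congrArg (fun L => L (0,1)) (key q hq).1)
  · refine ContinuousOn.congr (f := fun q => g2 q (1,0) (1,0)) ?_ ?_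
    · exact ((hg2cont.mono hUsub).clm_apply continuousOn_const).clm_apply continuousOn_const
    · intro q hq
      exact (hder (1,0) q hq).2
  · refine ContinuousOn.congr (f := fun q => g2 q (0,1) (0,1)) ?_ ?_
    · exact ((hg2cont.mono hUsub).clm_apply continuousOn_const).clm_apply continuousOn_const
    · intro q hq
      exact (hder (0,1) q hq).2
  · intro p hp
    exact ⟨(key p hp).2.1, ((hder (1,0) p hp).1).differentiableAt,
      ((hder (0,1) p hp).1).differentiableAt⟩
  · intro p hp
    have hmem : p ∈ C := hUsub hp
    have hn1 : ‖((1:ℝ),(0:ℝ))‖ = 1 := by simp [Prod.norm_def]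
    have hn2 : ‖((0:ℝ),(1:ℝ))‖ = 1 := by simp [Prod.norm_def]
    have e1 := (key p hp).1
    have b1 : ∀ v : ℝ × ℝ, ‖v‖ = 1 → |fderiv ℝ w p v| ≤ K1 := by
      intro v hv
      rw [e1]
      calc |g1 p v| ≤ ‖g1 p‖ * ‖v‖ := (g1 p).le_opNorm v
      _ ≤ K1 := by rw [hv, mul_one]; exact hK1 p hmem
    have b2 : ∀ v : ℝ × ℝ, ‖v‖ = 1 → |g2 p v v| ≤ K2 := by
      intro v hv
      calc |g2 p v v| ≤ ‖g2 p v‖ * ‖v‖ := (g2 p v).le_opNorm v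
      _ ≤ (‖g2 p‖ * ‖v‖) * ‖v‖ := by
            exact mul_le_mul_of_nonneg_right ((g2 p).le_opNorm v) (norm_nonneg v)
      _ ≤ K2 := by rw [hv]; simpa using hK2 p hmem
    have hxx : |dX (dX w) p| ≤ K2 := by
      have := (hder (1,0) p hp).2
      show |fderiv ℝ (dX w) p (1,0)| ≤ K2
      rw [show (dX w) = (fun q => fderiv ℝ w q (1,0)) from rfl, this]
      exact b2 _ hn1
    have hyy : |dY (dY w) p| ≤ K2 := by
      have := (hder (0,1) p hp).2
      show |fderiv ℝ (dY w) p (0,1)| ≤ K2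
      rw [show (dY w) = (fun q => fderiv ℝ w q (0,1)) from rfl, this]
      exact b2 _ hn2
    have hw0 : |w p| ≤ K0 := by simpa [Real.norm_eq_abs] using hK0 p hmem
    refine ⟨?_, ?_, ?_, ?_, ?_⟩
    · exact hw0.trans (by simp [le_max_iff])
    · exact (b1 _ hn1).trans (by simp [le_max_iff])
    · exact (b1 _ hn2).trans (by simp [le_max_iff])
    · exact hxx.trans (by simp [le_max_iff])
    · exact hyy.trans (by simp [le_max_iff])

set_option maxHeartbeats 1600000 in
/-- Caccioppoli-type estimate (3.4): for harmonic `w` on `R_b = (0,h)×(0,b)`, `b > 3h`,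
a cutoff `φ` equal to `1` on `[z,b-z]` with `|φ'| ≤ 2/z`, and any `ε > 0`:
`∫_{(h/4,3h/4)×(z,b-z)} |∇w|² ≤ (4/h)∫_{R_b}|w w_x| + (εz)⁻²∫_{bot∪top} w² + ε²∫_{bot∪top} w_y²`. -/
theorem caccioppoli_type_estimate (h b z ε : ℝ) (hh : 0 < h) (hb : 3 * h < b)
    (hz : z ∈ Ioo h (b / 2)) (hε : 0 < ε) (w : ℝ × ℝ → ℝ) (φ : ℝ → ℝ)
    (hw : ContDiffOn ℝ 2 w (closure (Rect h b))) (hharm : HarmonicOn2 w (Rect h b))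
    (hφ : ContDiff ℝ (⊤ : ℕ∞) φ) (hφ01 : ∀ y ∈ Icc (0 : ℝ) b, φ y ∈ Icc (0 : ℝ) 1)
    (hφ1 : ∀ y ∈ Icc z (b - z), φ y = 1)
    (hφ' : ∀ y ∈ Icc (0 : ℝ) b, |deriv φ y| ≤ 2 / z) :
    (∫ p in (Ioo (h / 4) (3 * h / 4) ×ˢ Ioo z (b - z)), ((dX w p) ^ 2 + (dY w p) ^ 2)) ≤
      4 / h * (∫ p in Rect h b, |w p * dX w p|) +
        1 / (ε ^ 2 * z ^ 2) *
          (∫ p in (Ioo (0 : ℝ) h ×ˢ Ioo (0 : ℝ) z ∪ Ioo (0 : ℝ) h ×ˢ Ioo (b - z) b), w p ^ 2) +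
        ε ^ 2 *
          ∫ p in (Ioo (0 : ℝ) h ×ˢ Ioo (0 : ℝ) z ∪ Ioo (0 : ℝ) h ×ˢ Ioo (b - z) b),
            (dY w p) ^ 2 := by
  obtain ⟨hz1, hz2⟩ := hz
  have hz0 : 0 < z := hh.trans hz1
  have hb0 : 0 < b := by linarith
  obtain ⟨M, hM0, cw, cw1, cw2, cw11, cw22, hdiff, hbd⟩ := aux_reg hh hb0 hw
  have hRect : Rect h b = Ioo (0:ℝ) h ×ˢ Ioo (0:ℝ) b := rfl
  have hUopen : IsOpen (Rect h b) := isOpen_Ioo.prod isOpen_Ioo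
  have hUmeas : MeasurableSet (Rect h b) := hUopen.measurableSet
  have hUvol : volume (Rect h b) ≠ ⊤ := by
    rw [hRect, Measure.volume_eq_prod, Measure.prod_prod]
    exact ENNReal.mul_ne_top (by simp [Real.volume_Ioo]) (by simp [Real.volume_Ioo])
  have memU : ∀ {x y : ℝ}, x ∈ Ioo (0:ℝ) h → y ∈ Ioo (0:ℝ) b → (x, y) ∈ Rect h b :=
    fun hx hy => ⟨hx, hy⟩
  -- generic integrability helpers
  have shape0 : ∀ (g : ℝ × ℝ → ℝ) (K : ℝ), ContinuousOn g (Rect h b) →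
      (∀ p ∈ Rect h b, |g p| ≤ K) →
      ∀ s : Set (ℝ × ℝ), MeasurableSet s → s ⊆ Rect h b → IntegrableOn g s := by
    intro g K hg hbg s hsm hsub
    exact aux_bdd_int hsm (ne_top_of_le_ne_top hUvol (measure_mono hsub))
      ((hg.mono hsub).aestronglyMeasurable hsm) (fun p hp => hbg p (hsub hp))
  have shape : ∀ (e : ℝ → ℝ) (g : ℝ × ℝ → ℝ) (K1 K2 : ℝ), Measurable e → (∀ y, |e y| ≤ K1) →
      ContinuousOn g (Rect h b) → (∀ p ∈ Rect h b, |g p| ≤ K2) →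
      ∀ s : Set (ℝ × ℝ), MeasurableSet s → s ⊆ Rect h b →
        IntegrableOn (fun p => e p.2 * g p) s := by
    intro e g K1 K2 he hbe hg hbg s hsm hsub
    refine aux_bdd_int (M := K1 * K2) hsm (ne_top_of_le_ne_top hUvol (measure_mono hsub)) ?_ ?_
    · exact ((he.comp measurable_snd).aestronglyMeasurable.restrict).mul
        ((hg.mono hsub).aestronglyMeasurable hsm)
    · intro p hp
      rw [abs_mul]
      exact mul_le_mul (hbe p.2) (hbg p (hsub hp)) (abs_nonneg _) ((abs_nonneg _).trans (hbe 0))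
  have shape1 : ∀ (e : ℝ → ℝ) (g : ℝ × ℝ → ℝ) (K1 K2 : ℝ), Measurable e → (∀ y, |e y| ≤ K1) →
      ContinuousOn g (Rect h b) → (∀ p ∈ Rect h b, |g p| ≤ K2) →
      ∀ x ∈ Ioo (0:ℝ) h, IntegrableOn (fun y => e y * g (x, y)) (Ioo (0:ℝ) b) := by
    intro e g K1 K2 he hbe hg hbg x hx
    refine aux_bdd_int (M := K1 * K2) measurableSet_Ioo (by simp [Real.volume_Ioo]) ?_ ?_
    · refine (he.aestronglyMeasurable.restrict).mul ?_
      refine ContinuousOn.aestronglyMeasurable ?_ measurableSet_Ioo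
      exact hg.comp (continuous_const.prodMk continuous_id).continuousOn
        (fun y hy => memU hx hy)
    · intro yy hyy
      rw [abs_mul]
      exact mul_le_mul (hbe yy) (hbg _ (memU hx hyy)) (abs_nonneg _) ((abs_nonneg _).trans (hbe 0))
  -- Fubini helpers
  have fubini : ∀ (f : ℝ × ℝ → ℝ) (s t : Set ℝ), IntegrableOn f (s ×ˢ t) →
      ∫ p in s ×ˢ t, f p = ∫ x in s, ∫ y in t, f (x, y) := by
    intro f s t hf
    rw [show (∫ p in s ×ˢ t, f p) = ∫ p in s ×ˢ t, f p ∂((volume : Measure ℝ).prod volume) from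
      by rw [← Measure.volume_eq_prod]]
    exact setIntegral_prod f (by rwa [← Measure.volume_eq_prod])
  have fubiniY : ∀ (f : ℝ × ℝ → ℝ) (s t : Set ℝ), IntegrableOn f (s ×ˢ t) →
      ∫ p in s ×ˢ t, f p = ∫ y in t, ∫ x in s, f (x, y) := by
    intro f s t hf
    rw [show (∫ p in s ×ˢ t, f p) = ∫ p in s ×ˢ t, f p ∂((volume : Measure ℝ).prod volume) from
      by rw [← Measure.volume_eq_prod]]
    rw [show ((volume : Measure ℝ).prod volume).restrict (s ×ˢ t)
        = ((volume : Measure ℝ).restrict s).prod ((volume : Measure ℝ).restrict t) from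
      (Measure.prod_restrict s t).symm]
    exact integral_prod_symm f (by
      rw [Measure.prod_restrict s t, ← Measure.volume_eq_prod]; exact hf)
  -- the side integral function
  set G : ℝ → ℝ := fun x => ∫ y in Ioo (0:ℝ) b, |w (x, y) * dX w (x, y)| with hGdef
  have hIabs : IntegrableOn (fun p => |w p * dX w p|) (Rect h b) :=
    shape0 _ (M * M) ((cw.mul cw1).abs) (fun p hp => by
      rw [abs_abs, Pi.mul_apply, abs_mul]
      exact mul_le_mul (hbd p hp).1 (hbd p hp).2.1 (abs_nonneg _) hM0)
      (Rect h b) hUmeas Subset.rfl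
  have hGint : IntegrableOn G (Ioo (0:ℝ) h) := by
    have hf : Integrable (fun p : ℝ × ℝ => |w p * dX w p|)
        (((volume : Measure ℝ).restrict (Ioo (0:ℝ) h)).prod
          ((volume : Measure ℝ).restrict (Ioo (0:ℝ) b))) := by
      rw [Measure.prod_restrict, ← Measure.volume_eq_prod]
      exact hIabs
    exact hf.integral_prod_left.congr (Filter.Eventually.of_forall (fun x => rfl))
  have hGnn : ∀ x, 0 ≤ G x := fun x => integral_nonneg (fun y => abs_nonneg _)
  set I := ∫ p in Rect h b, |w p * dX w p| with hIdef
  have hGI : ∫ x in Ioo (0:ℝ) h, G x = I := by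
    rw [hIdef, hRect, fubini _ _ _ hIabs]
  have hGiv : IntervalIntegrable G volume 0 h :=
    (intervalIntegrable_iff_integrableOn_Ioo_of_le hh.le).2 hGint
  have hGsub : ∀ u v : ℝ, 0 ≤ u → v ≤ h → u ≤ v → IntervalIntegrable G volume u v := by
    intro u v hu hv huv
    refine hGiv.mono_set ?_
    rw [uIcc_of_le huv, uIcc_of_le hh.le]
    exact Icc_subset_Icc hu hv
  have havg : ∃ t ∈ Ioo (h/4) (h/2), G (h/2 + t) + G (h/2 - t) ≤ 4 / h * I := by
    have h14 : (0:ℝ) ≤ h/4 := by linarith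
    have hq : h/4 < h/2 := by linarith
    have i1 : IntervalIntegrable (fun t => G (h/2 + t)) volume (h/4) (h/2) := by
      have := (hGsub (3*h/4) h (by linarith) le_rfl (by linarith)).comp_add_left (h/2)
      refine this.mono_set ?_
      rw [show 3*h/4 - h/2 = h/4 by ring, show h - h/2 = h/2 by ring]
    have i2 : IntervalIntegrable (fun t => G (h/2 - t)) volume (h/4) (h/2) := by
      have := (hGsub 0 (h/4) le_rfl (by linarith) (by linarith)).comp_sub_left (h/2)
      refine this.mono_set ?_
      rw [show h/2 - (0:ℝ) = h/2 by ring, show h/2 - h/4 = h/4 by ring, uIcc_comm]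
    have isum : IntervalIntegrable (fun t => G (h/2 + t) + G (h/2 - t)) volume (h/4) (h/2) :=
      i1.add i2
    refine aux_avg hq ((intervalIntegrable_iff_integrableOn_Ioo_of_le hq.le).1 isum) ?_
    have e0 : ∫ t in Ioo (h/4) (h/2), (G (h/2 + t) + G (h/2 - t))
        = ∫ t in (h/4)..(h/2), (G (h/2 + t) + G (h/2 - t)) := by
      rw [intervalIntegral.integral_of_le hq.le, integral_Ioc_eq_integral_Ioo]
    have e1 : ∫ t in (h/4)..(h/2), (G (h/2 + t) + G (h/2 - t))
        = (∫ t in (h/4)..(h/2), G (h/2 + t)) + ∫ t in (h/4)..(h/2), G (h/2 - t) :=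
      intervalIntegral.integral_add i1 i2
    have e2 : (∫ t in (h/4)..(h/2), G (h/2 + t)) = ∫ x in (3*h/4)..h, G x := by
      rw [intervalIntegral.integral_comp_add_left G (h/2),
        show h/2 + h/4 = 3*h/4 by ring, show h/2 + h/2 = h by ring]
    have e3 : (∫ t in (h/4)..(h/2), G (h/2 - t)) = ∫ x in (0:ℝ)..(h/4), G x := by
      rw [intervalIntegral.integral_comp_sub_left G (h/2),
        show h/2 - h/2 = (0:ℝ) by ring, show h/2 - h/4 = h/4 by ring]
    have esplit : (∫ x in (0:ℝ)..(h/4), G x) + (∫ x in (h/4)..(3*h/4), G x)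
        + (∫ x in (3*h/4)..h, G x) = ∫ x in (0:ℝ)..h, G x := by
      rw [intervalIntegral.integral_add_adjacent_intervals
        (hGsub 0 (h/4) le_rfl (by linarith) (by linarith))
        (hGsub (h/4) (3*h/4) (by linarith) (by linarith) (by linarith)),
        intervalIntegral.integral_add_adjacent_intervals
        (hGsub 0 (3*h/4) le_rfl (by linarith) (by linarith))
        (hGsub (3*h/4) h (by linarith) le_rfl (by linarith))]
    have hmid : 0 ≤ ∫ x in (h/4)..(3*h/4), G x :=
      intervalIntegral.integral_nonneg (by linarith) (fun u _ => hGnn u)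
    have hIeq : (∫ x in (0:ℝ)..h, G x) = I := by
      rw [intervalIntegral.integral_of_le hh.le, integral_Ioc_eq_integral_Ioo, hGI]
    have : (∫ t in (h/4)..(h/2), G (h/2 + t)) + (∫ t in (h/4)..(h/2), G (h/2 - t)) ≤ I := by
      rw [e2, e3, ← hIeq, ← esplit]
      linarith
    rw [e0, e1]
    calc (∫ t in (h/4)..(h/2), G (h/2 + t)) + (∫ t in (h/4)..(h/2), G (h/2 - t)) ≤ I := this
    _ ≤ 4 / h * I * (h/2 - h/4) := by
        rw [show 4 / h * I * (h/2 - h/4) = I * ((4/h) * (h/4)) by ring,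
          show (4:ℝ)/h * (h/4) = 1 by field_simp]
        simp
  -- cutoff function
  set c : ℝ := z / 4 with hcdef
  have hc0 : 0 < c := by rw [hcdef]; linarith
  have hcz : c < z := by rw [hcdef]; linarith
  have hLpos : 0 < z - c := by linarith
  have hzbz : z < b - z := by linarith
  have hbzbc : b - z < b - c := by linarith
  have hbcb : b - c < b := by linarith
  have hcb : c < b := by linarith
  set η : ℝ → ℝ := fun y => max 0 (min 1 (min ((y - c) / (z - c)) ((b - c - y) / (z - c))))
    with hηdef
  set η' : ℝ → ℝ := fun y => if y ∈ Ioo c z then 1 / (z - c)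
    else if y ∈ Ioo (b - z) (b - c) then -(1 / (z - c)) else 0 with hη'def
  have ηcont : Continuous η := by
    apply continuous_const.max
    apply continuous_const.min
    exact (((continuous_id.sub continuous_const).div_const _).min
      ((continuous_const.sub continuous_id).div_const _))
  have η0 : ∀ y, 0 ≤ η y := fun y => le_max_left _ _
  have η1 : ∀ y, η y ≤ 1 := fun y => max_le zero_le_one (min_le_left _ _)
  have ηone : ∀ y, z ≤ y → y ≤ b - z → η y = 1 := by
    intro y h1 h2
    have e1 : (1:ℝ) ≤ (y - c) / (z - c) := (le_div_iff₀ hLpos).2 (by linarith)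
    have e2 : (1:ℝ) ≤ (b - c - y) / (z - c) := (le_div_iff₀ hLpos).2 (by linarith)
    rw [hηdef]
    simp only []
    rw [min_eq_left (le_min e1 e2), max_eq_right zero_le_one]
  have ηzero0 : ∀ y, y ≤ c → η y = 0 := by
    intro y h1
    have e1 : (y - c) / (z - c) ≤ 0 := div_nonpos_of_nonpos_of_nonneg (by linarith) hLpos.le
    have hm0 : min ((y - c) / (z - c)) ((b - c - y) / (z - c)) ≤ 0 :=
      (min_le_left _ _).trans e1
    rw [hηdef]
    simp only []
    rw [min_eq_right (hm0.trans zero_le_one), max_eq_left hm0]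
  have ηzerob : ∀ y, b - c ≤ y → η y = 0 := by
    intro y h1
    have e1 : (b - c - y) / (z - c) ≤ 0 := div_nonpos_of_nonpos_of_nonneg (by linarith) hLpos.le
    have hm0 : min ((y - c) / (z - c)) ((b - c - y) / (z - c)) ≤ 0 :=
      (min_le_right _ _).trans e1
    rw [hηdef]
    simp only []
    rw [min_eq_right (hm0.trans zero_le_one), max_eq_left hm0]
  have ηd1 : ∀ y ∈ Ioo c z, HasDerivAt η (1 / (z - c)) y := by
    intro y hy
    have haff : HasDerivAt (fun u => (u - c) / (z - c)) (1 / (z - c)) y :=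
      ((hasDerivAt_id y).sub_const c).div_const (z - c)
    refine haff.congr_of_eventuallyEq ?_
    filter_upwards [isOpen_Ioo.mem_nhds hy] with u hu
    have hA0 : 0 ≤ (u - c) / (z - c) := div_nonneg (by linarith [hu.1]) hLpos.le
    have hA1 : (u - c) / (z - c) ≤ 1 := (div_le_one hLpos).2 (by linarith [hu.2])
    have hAB : (u - c) / (z - c) ≤ (b - c - u) / (z - c) :=
      (div_le_div_iff_of_pos_right hLpos).2 (by nlinarith [hu.2])
    rw [hηdef]
    simp only []
    rw [min_eq_left hAB, min_eq_right hA1, max_eq_right hA0]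
  have ηd2 : ∀ y ∈ Ioo z (b - z), HasDerivAt η 0 y := by
    intro y hy
    refine (hasDerivAt_const y (1:ℝ)).congr_of_eventuallyEq ?_
    filter_upwards [isOpen_Ioo.mem_nhds hy] with u hu
    exact ηone u hu.1.le hu.2.le
  have ηd3 : ∀ y ∈ Ioo (b - z) (b - c), HasDerivAt η (-(1 / (z - c))) y := by
    intro y hy
    have haff : HasDerivAt (fun u => (b - c - u) / (z - c)) (-(1 / (z - c))) y := by
      have := (HasDerivAt.const_sub (b - c) (hasDerivAt_id y)).div_const (z - c)
      simpa [neg_div] using this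
    refine haff.congr_of_eventuallyEq ?_
    filter_upwards [isOpen_Ioo.mem_nhds hy] with u hu
    have hB0 : 0 ≤ (b - c - u) / (z - c) := div_nonneg (by linarith [hu.2]) hLpos.le
    have hB1 : (b - c - u) / (z - c) ≤ 1 := (div_le_one hLpos).2 (by linarith [hu.1])
    have hBA : (b - c - u) / (z - c) ≤ (u - c) / (z - c) :=
      (div_le_div_iff_of_pos_right hLpos).2 (by nlinarith [hu.1])
    rw [hηdef]
    simp only []
    rw [min_eq_right hBA, min_eq_right hB1, max_eq_right hB0]
  have η'1 : ∀ y ∈ Ioo c z, η' y = 1 / (z - c) := by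
    intro y hy
    rw [hη'def]
    simp only []
    rw [if_pos hy]
  have η'2 : ∀ y, y ∉ Ioo c z → y ∉ Ioo (b - z) (b - c) → η' y = 0 := by
    intro y h1 h2
    rw [hη'def]
    simp only []
    rw [if_neg h1, if_neg h2]
  have η'3 : ∀ y ∈ Ioo (b - z) (b - c), η' y = -(1 / (z - c)) := by
    intro y hy
    have h1 : y ∉ Ioo c z := fun hmem => absurd hmem.2 (not_lt.2 (by linarith [hy.1]))
    rw [hη'def]
    simp only []
    rw [if_neg h1, if_pos hy]
  have η'bound : ∀ y, |η' y| ≤ 1 / (z - c) := by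
    intro y
    rw [hη'def]
    simp only []
    split_ifs
    · rw [abs_of_nonneg (by positivity)]
    · rw [abs_neg, abs_of_nonneg (by positivity)]
    · rw [abs_zero]; positivity
  have η'meas : Measurable η' := by
    rw [hη'def]
    exact Measurable.ite measurableSet_Ioo measurable_const
      (Measurable.ite measurableSet_Ioo measurable_const measurable_const)
  -- slice derivatives
  have sliceWX : ∀ x y : ℝ, (x, y) ∈ Rect h b →
      HasDerivAt (fun u => w (u, y)) (dX w (x, y)) x := by
    intro x y hp
    exact (hdiff _ hp).1.hasFDerivAt.comp_hasDerivAt x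
      ((hasDerivAt_id x).prodMk (hasDerivAt_const x y))
  have sliceW1X : ∀ x y : ℝ, (x, y) ∈ Rect h b →
      HasDerivAt (fun u => dX w (u, y)) (dX (dX w) (x, y)) x := by
    intro x y hp
    exact (hdiff _ hp).2.1.hasFDerivAt.comp_hasDerivAt x
      ((hasDerivAt_id x).prodMk (hasDerivAt_const x y))
  have sliceWY : ∀ x y : ℝ, (x, y) ∈ Rect h b →
      HasDerivAt (fun v => w (x, v)) (dY w (x, y)) y := by
    intro x y hp
    exact (hdiff _ hp).1.hasFDerivAt.comp_hasDerivAt y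
      ((hasDerivAt_const y x).prodMk (hasDerivAt_id y))
  have sliceW2Y : ∀ x y : ℝ, (x, y) ∈ Rect h b →
      HasDerivAt (fun v => dY w (x, v)) (dY (dY w) (x, y)) y := by
    intro x y hp
    exact (hdiff _ hp).2.2.hasFDerivAt.comp_hasDerivAt y
      ((hasDerivAt_const y x).prodMk (hasDerivAt_id y))
  have ηabs : ∀ y, |η y| ≤ 1 := fun y => abs_le.2 ⟨by linarith [η0 y], η1 y⟩
  have bWW2 : ∀ p ∈ Rect h b, |w p * dY w p| ≤ M * M := fun p hp => by
    rw [abs_mul]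
    exact mul_le_mul (hbd p hp).1 (hbd p hp).2.2.1 (abs_nonneg _) hM0
  have bWW1 : ∀ p ∈ Rect h b, |w p * dX w p| ≤ M * M := fun p hp => by
    rw [abs_mul]
    exact mul_le_mul (hbd p hp).1 (hbd p hp).2.1 (abs_nonneg _) hM0
  have bQy : ∀ p ∈ Rect h b, |dY w p * dY w p + w p * dY (dY w) p| ≤ M * M + M * M :=
    fun p hp => (abs_add_le _ _).trans (add_le_add
      (by rw [abs_mul]; exact mul_le_mul (hbd p hp).2.2.1 (hbd p hp).2.2.1 (abs_nonneg _) hM0)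
      (by rw [abs_mul]; exact mul_le_mul (hbd p hp).1 (hbd p hp).2.2.2.2 (abs_nonneg _) hM0))
  have bQx : ∀ p ∈ Rect h b, |dX w p * dX w p + w p * dX (dX w) p| ≤ M * M + M * M :=
    fun p hp => (abs_add_le _ _).trans (add_le_add
      (by rw [abs_mul]; exact mul_le_mul (hbd p hp).2.1 (hbd p hp).2.1 (abs_nonneg _) hM0)
      (by rw [abs_mul]; exact mul_le_mul (hbd p hp).1 (hbd p hp).2.2.2.1 (abs_nonneg _) hM0))
  have bQ : ∀ p ∈ Rect h b, |dX w p ^ 2 + dY w p ^ 2| ≤ M * M + M * M := fun p hp => by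
    rw [abs_of_nonneg (by positivity)]
    have h1 : dX w p ^ 2 ≤ M * M := by
      rw [pow_two, ← abs_mul_abs_self (dX w p)]
      exact mul_le_mul (hbd p hp).2.1 (hbd p hp).2.1 (abs_nonneg _) hM0
    have h2 : dY w p ^ 2 ≤ M * M := by
      rw [pow_two, ← abs_mul_abs_self (dY w p)]
      exact mul_le_mul (hbd p hp).2.2.1 (hbd p hp).2.2.1 (abs_nonneg _) hM0
    linarith
  -- FTC in the y-direction
  have ftcY : ∀ x ∈ Ioo (0:ℝ) h, ∫ y in Ioo (0:ℝ) b,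
      (η' y * (w (x, y) * dY w (x, y))
        + η y * (dY w (x, y) * dY w (x, y) + w (x, y) * dY (dY w) (x, y))) = 0 := by
    intro x hx
    set f' : ℝ → ℝ := fun y => η' y * (w (x, y) * dY w (x, y))
      + η y * (dY w (x, y) * dY w (x, y) + w (x, y) * dY (dY w) (x, y)) with hf'def
    set F : ℝ → ℝ := fun yy => η yy * (w (x, yy) * dY w (x, yy)) with hFdef
    have hf'i : IntegrableOn f' (Ioo (0:ℝ) b) := by
      refine Integrable.add ?_ ?_
      · exact shape1 η' (fun p => w p * dY w p) (1/(z-c)) (M*M) η'meas η'bound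
          (cw.mul cw2) bWW2 x hx
      · exact shape1 η (fun p => dY w p * dY w p + w p * dY (dY w) p) 1 (M*M+M*M)
          ηcont.measurable ηabs ((cw2.mul cw2).add (cw.mul cw22)) bQy x hx
    have hIv : IntervalIntegrable f' volume 0 b :=
      (intervalIntegrable_iff_integrableOn_Ioo_of_le hb0.le).2 hf'i
    have ii : ∀ u v : ℝ, 0 ≤ u → v ≤ b → u ≤ v → IntervalIntegrable f' volume u v := by
      intro u v hu hv huv
      refine hIv.mono_set ?_
      rw [uIcc_of_le huv, uIcc_of_le hb0.le]
      exact Icc_subset_Icc hu hv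
    have hFcont : ∀ a' b' : ℝ, 0 < a' → b' < b → ContinuousOn F (Icc a' b') := by
      intro a' b' ha' hb'
      refine (ηcont.continuousOn).mul (ContinuousOn.mul ?_ ?_)
      · exact cw.comp (continuous_const.prodMk continuous_id).continuousOn
          (fun yy hyy => memU hx ⟨ha'.trans_le hyy.1, hyy.2.trans_lt hb'⟩)
      · exact cw2.comp (continuous_const.prodMk continuous_id).continuousOn
          (fun yy hyy => memU hx ⟨ha'.trans_le hyy.1, hyy.2.trans_lt hb'⟩)
    have e0 : ∫ y in (0:ℝ)..c, f' y = 0 := by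
      rw [intervalIntegral.integral_congr (g := fun _ => (0:ℝ)) ?_,
        intervalIntegral.integral_const, smul_zero]
      intro y hy
      rw [uIcc_of_le hc0.le] at hy
      have h1 : y ∉ Ioo c z := fun hmem => absurd hmem.1 (not_lt.2 hy.2)
      have h2 : y ∉ Ioo (b - z) (b - c) := fun hmem =>
        absurd hmem.1 (not_lt.2 (by linarith [hy.2]))
      rw [hf'def]
      simp only []
      rw [η'2 y h1 h2, ηzero0 y hy.2, zero_mul, zero_mul, add_zero]
    have e4 : ∫ y in (b-c)..b, f' y = 0 := by
      rw [intervalIntegral.integral_congr (g := fun _ => (0:ℝ)) ?_,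
        intervalIntegral.integral_const, smul_zero]
      intro y hy
      rw [uIcc_of_le hbcb.le] at hy
      have h1 : y ∉ Ioo c z := fun hmem => absurd hmem.2 (not_lt.2 (by linarith [hy.1]))
      have h2 : y ∉ Ioo (b - z) (b - c) := fun hmem => absurd hmem.2 (not_lt.2 hy.1)
      rw [hf'def]
      simp only []
      rw [η'2 y h1 h2, ηzerob y hy.1, zero_mul, zero_mul, add_zero]
    have e1 : ∫ y in c..z, f' y = F z - F c := by
      refine intervalIntegral.integral_eq_sub_of_hasDeriv_right_of_le hcz.le
        (hFcont c z hc0 (by linarith)) ?_ (ii c z hc0.le (by linarith) hcz.le)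
      intro y hy
      have hp : (x, y) ∈ Rect h b := memU hx ⟨hc0.trans hy.1, by linarith [hy.2]⟩
      have hd := (ηd1 y hy).mul ((sliceWY x y hp).mul (sliceW2Y x y hp))
      rw [hf'def]
      simp only []
      rw [η'1 y hy]
      exact hd.hasDerivWithinAt
    have e2 : ∫ y in z..(b-z), f' y = F (b-z) - F z := by
      refine intervalIntegral.integral_eq_sub_of_hasDeriv_right_of_le hzbz.le
        (hFcont z (b-z) hz0 (by linarith)) ?_ (ii z (b-z) hz0.le (by linarith) hzbz.le)
      intro y hy
      have hp : (x, y) ∈ Rect h b := memU hx ⟨hz0.trans hy.1, by linarith [hy.2]⟩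
      have hd := (ηd2 y hy).mul ((sliceWY x y hp).mul (sliceW2Y x y hp))
      have h1 : y ∉ Ioo c z := fun hmem => absurd hmem.2 (not_lt.2 hy.1.le)
      have h2 : y ∉ Ioo (b - z) (b - c) := fun hmem => absurd hmem.1 (not_lt.2 hy.2.le)
      rw [hf'def]
      simp only []
      rw [η'2 y h1 h2]
      exact hd.hasDerivWithinAt
    have e3 : ∫ y in (b-z)..(b-c), f' y = F (b-c) - F (b-z) := by
      refine intervalIntegral.integral_eq_sub_of_hasDeriv_right_of_le hbzbc.le
        (hFcont (b-z) (b-c) (by linarith) hbcb) ?_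
        (ii (b-z) (b-c) (by linarith) hbcb.le hbzbc.le)
      intro y hy
      have hp : (x, y) ∈ Rect h b := memU hx ⟨by linarith [hy.1], by linarith [hy.2]⟩
      have hd := (ηd3 y hy).mul ((sliceWY x y hp).mul (sliceW2Y x y hp))
      rw [hf'def]
      simp only []
      rw [η'3 y hy]
      exact hd.hasDerivWithinAt
    have hFc : F c = 0 := by rw [hFdef]; simp only []; rw [ηzero0 c le_rfl, zero_mul]
    have hFbc : F (b-c) = 0 := by rw [hFdef]; simp only []; rw [ηzerob (b-c) le_rfl, zero_mul]
    have T : ∫ y in (0:ℝ)..b, f' y = 0 := by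
      rw [← intervalIntegral.integral_add_adjacent_intervals
          (ii 0 (b-c) le_rfl hbcb.le (by linarith)) (ii (b-c) b (by linarith) le_rfl hbcb.le),
        ← intervalIntegral.integral_add_adjacent_intervals
          (ii 0 (b-z) le_rfl (by linarith) (by linarith))
          (ii (b-z) (b-c) (by linarith) hbcb.le hbzbc.le),
        ← intervalIntegral.integral_add_adjacent_intervals
          (ii 0 z le_rfl (by linarith) hz0.le) (ii z (b-z) hz0.le (by linarith) hzbz.le),
        ← intervalIntegral.integral_add_adjacent_intervals
          (ii 0 c le_rfl (by linarith) hc0.le) (ii c z hc0.le (by linarith) hcz.le),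
        e0, e1, e2, e3, e4, hFc, hFbc]
      ring
    rw [← integral_Ioc_eq_integral_Ioo, ← intervalIntegral.integral_of_le hb0.le]
    exact T
  have shape1p : ∀ (g : ℝ × ℝ → ℝ) (K : ℝ), ContinuousOn g (Rect h b) →
      (∀ p ∈ Rect h b, |g p| ≤ K) →
      ∀ x ∈ Ioo (0:ℝ) h, IntegrableOn (fun y => g (x, y)) (Ioo (0:ℝ) b) := by
    intro g K hg hbg x hx
    refine aux_bdd_int (M := K) measurableSet_Ioo (by simp [Real.volume_Ioo]) ?_ ?_
    · refine ContinuousOn.aestronglyMeasurable ?_ measurableSet_Ioo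
      exact hg.comp (continuous_const.prodMk continuous_id).continuousOn
        (fun y hy => memU hx hy)
    · exact fun yy hyy => hbg _ (memU hx hyy)
  -- choose the good slice parameter t
  obtain ⟨t, ht, hΦ⟩ := havg
  set Xm : ℝ := h/2 - t with hXmdef
  set Xp : ℝ := h/2 + t with hXpdef
  have hXm0 : 0 < Xm := by rw [hXmdef]; linarith [ht.2]
  have hXmq : Xm < h/4 := by rw [hXmdef]; linarith [ht.1]
  have hXpq : 3*h/4 < Xp := by rw [hXpdef]; linarith [ht.1]
  have hXph : Xp < h := by rw [hXpdef]; linarith [ht.2]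
  have hXmp : Xm < Xp := by rw [hXmdef, hXpdef]; linarith [ht.1, hh]
  have hXmI : Xm ∈ Ioo (0:ℝ) h := ⟨hXm0, by linarith⟩
  have hXpI : Xp ∈ Ioo (0:ℝ) h := ⟨by linarith, hXph⟩
  set S : Set (ℝ × ℝ) := Ioo Xm Xp ×ˢ Ioo (0:ℝ) b with hSdef
  have hSsub : S ⊆ Rect h b := by
    rw [hSdef, hRect]
    exact prod_mono (Ioo_subset_Ioo hXm0.le hXph.le) Subset.rfl
  have hSmeas : MeasurableSet S := measurableSet_Ioo.prod measurableSet_Ioo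
  -- FTC in the x-direction
  have ftcX : ∀ y ∈ Ioo (0:ℝ) b,
      ∫ u in Ioo Xm Xp, (dX w (u, y) * dX w (u, y) + w (u, y) * dX (dX w) (u, y))
        = w (Xp, y) * dX w (Xp, y) - w (Xm, y) * dX w (Xm, y) := by
    intro y hy
    have hmaps : ∀ u ∈ uIcc Xm Xp, (u, y) ∈ Rect h b := by
      intro u hu
      rw [uIcc_of_le hXmp.le] at hu
      exact memU ⟨hXm0.trans_le hu.1, hu.2.trans_lt hXph⟩ hy
    have hcsl : ∀ (g : ℝ × ℝ → ℝ), ContinuousOn g (Rect h b) →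
        ContinuousOn (fun u => g (u, y)) (uIcc Xm Xp) := fun g hg =>
      hg.comp (continuous_id.prodMk continuous_const).continuousOn hmaps
    have hder : ∀ u ∈ uIcc Xm Xp, HasDerivAt (fun u' => w (u', y) * dX w (u', y))
        (dX w (u, y) * dX w (u, y) + w (u, y) * dX (dX w) (u, y)) u := by
      intro u hu
      exact (sliceWX u y (hmaps u hu)).mul (sliceW1X u y (hmaps u hu))
    have := intervalIntegral.integral_eq_sub_of_hasDerivAt hder
      ((((hcsl _ cw1).mul (hcsl _ cw1)).add ((hcsl _ cw).mul (hcsl _ cw11))).intervalIntegrable)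
    rwa [intervalIntegral.integral_of_le hXmp.le, integral_Ioc_eq_integral_Ioo] at this
  -- integrability over S
  have hintA1 : IntegrableOn (fun p => η p.2 * (dX w p * dX w p + w p * dX (dX w) p)) S :=
    shape η _ 1 (M*M+M*M) ηcont.measurable ηabs ((cw1.mul cw1).add (cw.mul cw11)) bQx S hSmeas hSsub
  have hintA2 : IntegrableOn (fun p => η' p.2 * (w p * dY w p)) S :=
    shape η' _ (1/(z-c)) (M*M) η'meas η'bound (cw.mul cw2) bWW2 S hSmeas hSsub
  have hintA3 : IntegrableOn (fun p => η p.2 * (dY w p * dY w p + w p * dY (dY w) p)) S :=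
    shape η _ 1 (M*M+M*M) ηcont.measurable ηabs ((cw2.mul cw2).add (cw.mul cw22)) bQy S hSmeas hSsub
  have hintQ : IntegrableOn (fun p => η p.2 * (dX w p ^ 2 + dY w p ^ 2)) S :=
    shape η _ 1 (M*M+M*M) ηcont.measurable ηabs ((cw1.pow 2).add (cw2.pow 2)) bQ S hSmeas hSsub
  -- the two Fubini computations
  have hI1 : ∫ p in S, η p.2 * (dX w p * dX w p + w p * dX (dX w) p)
      = ∫ y in Ioo (0:ℝ) b, η y * (w (Xp, y) * dX w (Xp, y) - w (Xm, y) * dX w (Xm, y)) := by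
    rw [hSdef] at hintA1 ⊢
    rw [fubiniY _ _ _ hintA1]
    refine setIntegral_congr_fun measurableSet_Ioo (fun y hy => ?_)
    have : (∫ u in Ioo Xm Xp, (fun p : ℝ × ℝ => η p.2 * (dX w p * dX w p + w p * dX (dX w) p)) (u, y))
        = ∫ u in Ioo Xm Xp, η y * (dX w (u, y) * dX w (u, y) + w (u, y) * dX (dX w) (u, y)) := rfl
    rw [this, integral_const_mul, ftcX y hy]
  have hI23 : (∫ p in S, η' p.2 * (w p * dY w p))
      + (∫ p in S, η p.2 * (dY w p * dY w p + w p * dY (dY w) p)) = 0 := by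
    rw [← integral_add hintA2 hintA3]
    have hintA23 : IntegrableOn (fun p => η' p.2 * (w p * dY w p)
        + η p.2 * (dY w p * dY w p + w p * dY (dY w) p)) S := hintA2.add hintA3
    rw [hSdef] at hintA23 ⊢
    rw [fubini _ _ _ hintA23]
    rw [setIntegral_congr_fun (g := fun _ => (0:ℝ)) measurableSet_Ioo
      (fun x hx => ftcY x ⟨hXm0.trans hx.1, hx.2.trans hXph⟩)]
    simp
  -- Young-type inequality
  have young : ∀ a d : ℝ, 1/(z-c) * |a * d| ≤ 1/(ε^2*z^2) * a^2 + ε^2 * d^2 := by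
    intro a d
    have hzc : z - c = 3*z/4 := by rw [hcdef]; ring
    have had : |a * d| = |a| * |d| := abs_mul a d
    have ha2 : a^2 = |a|^2 := (sq_abs a).symm
    have hd2 : d^2 = |d|^2 := (sq_abs d).symm
    rw [hzc, had, ha2, hd2]
    have hu : 0 ≤ |a| := abs_nonneg a
    have hv : 0 ≤ |d| := abs_nonneg d
    rw [← sub_nonneg]
    have expand : 1/(ε^2*z^2) * |a|^2 + ε^2 * |d|^2 - 1/(3*z/4) * (|a| * |d|)
        = (3*z*(|a| - ε^2*z*|d|)^2 + 2*ε^2*z^2*(|a| * |d|)) / (3*z*(ε^2*z^2)) := by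
      field_simp
      ring
    rw [expand]
    refine div_nonneg (add_nonneg (by positivity) ?_) (by positivity)
    exact mul_nonneg (by positivity) (mul_nonneg hu hv)
  -- the penalty function and the bottom/top region
  set Pf : ℝ × ℝ → ℝ := fun p => 1/(ε^2*z^2) * w p ^ 2 + ε^2 * dY w p ^ 2 with hPfdef
  set V : Set (ℝ × ℝ) := Ioo (0:ℝ) h ×ˢ Ioo (0:ℝ) z ∪ Ioo (0:ℝ) h ×ˢ Ioo (b-z) b with hVdef
  have hVmeas : MeasurableSet V :=
    (measurableSet_Ioo.prod measurableSet_Ioo).union (measurableSet_Ioo.prod measurableSet_Ioo)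
  have hVsub : V ⊆ Rect h b := by
    rw [hVdef, hRect]
    exact union_subset (prod_mono Subset.rfl (Ioo_subset_Ioo le_rfl (by linarith)))
      (prod_mono Subset.rfl (Ioo_subset_Ioo (by linarith) le_rfl))
  have bW2 : ∀ p ∈ Rect h b, |w p ^ 2| ≤ M * M := fun p hp => by
    rw [abs_of_nonneg (sq_nonneg _), pow_two, ← abs_mul_abs_self (w p)]
    exact mul_le_mul (hbd p hp).1 (hbd p hp).1 (abs_nonneg _) hM0
  have bW22 : ∀ p ∈ Rect h b, |dY w p ^ 2| ≤ M * M := fun p hp => by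
    rw [abs_of_nonneg (sq_nonneg _), pow_two, ← abs_mul_abs_self (dY w p)]
    exact mul_le_mul (hbd p hp).2.2.1 (hbd p hp).2.2.1 (abs_nonneg _) hM0
  have cPf : ContinuousOn Pf (Rect h b) :=
    (continuousOn_const.mul (cw.pow 2)).add (continuousOn_const.mul (cw2.pow 2))
  have bPf : ∀ p ∈ Rect h b, |Pf p| ≤ 1/(ε^2*z^2)*(M*M) + ε^2*(M*M) := by
    intro p hp
    have h1 : w p ^ 2 ≤ M*M := (abs_of_nonneg (sq_nonneg (w p))) ▸ bW2 p hp
    have h2 : dY w p ^ 2 ≤ M*M := (abs_of_nonneg (sq_nonneg (dY w p))) ▸ bW22 p hp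
    rw [hPfdef]
    simp only []
    rw [abs_of_nonneg (by positivity)]
    have e1 : 1/(ε^2*z^2) * w p ^ 2 ≤ 1/(ε^2*z^2)*(M*M) :=
      mul_le_mul_of_nonneg_left h1 (by positivity)
    have e2 : ε^2 * dY w p ^ 2 ≤ ε^2*(M*M) := mul_le_mul_of_nonneg_left h2 (by positivity)
    linarith
  have hPfV : IntegrableOn Pf V := shape0 Pf _ cPf bPf V hVmeas hVsub
  have hPfS : IntegrableOn Pf S := shape0 Pf _ cPf bPf S hSmeas hSsub
  have hPfnn : ∀ p : ℝ × ℝ, 0 ≤ Pf p := fun p => by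
    rw [hPfdef]; simp only []; positivity
  set J : Set ℝ := Ioo c z ∪ Ioo (b-z) (b-c) with hJdef
  have hJmeas : MeasurableSet (Prod.snd ⁻¹' J : Set (ℝ × ℝ)) :=
    (measurableSet_Ioo.union measurableSet_Ioo).preimage measurable_snd
  have hA2bound : -(∫ p in S, η' p.2 * (w p * dY w p))
      ≤ 1/(ε^2*z^2) * (∫ p in V, w p ^ 2) + ε^2 * (∫ p in V, dY w p ^ 2) := by
    have s1 : -(∫ p in S, η' p.2 * (w p * dY w p))
        ≤ ∫ p in S, |η' p.2 * (w p * dY w p)| := by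
      have hn := norm_integral_le_integral_norm (μ := volume.restrict S)
        (fun p => η' p.2 * (w p * dY w p))
      simp only [Real.norm_eq_abs] at hn
      linarith [neg_abs_le (∫ p in S, η' p.2 * (w p * dY w p))]
    have s2 : (∫ p in S, |η' p.2 * (w p * dY w p)|)
        ≤ ∫ p in S, (Prod.snd ⁻¹' J).indicator Pf p := by
      refine setIntegral_mono_on hintA2.abs (hPfS.indicator hJmeas) hSmeas ?_
      intro p hp
      by_cases hJm : p.2 ∈ J
      · rw [indicator_of_mem (by exact hJm : p ∈ Prod.snd ⁻¹' J)]
        calc |η' p.2 * (w p * dY w p)| = |η' p.2| * |w p * dY w p| := abs_mul _ _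
        _ ≤ (1/(z-c)) * |w p * dY w p| :=
            mul_le_mul_of_nonneg_right (η'bound p.2) (abs_nonneg _)
        _ ≤ 1/(ε^2*z^2) * w p ^ 2 + ε^2 * dY w p ^ 2 := young (w p) (dY w p)
        _ = Pf p := rfl
      · rw [indicator_of_notMem (by exact hJm : p ∉ Prod.snd ⁻¹' J)]
        have h1 : p.2 ∉ Ioo c z := fun hm => hJm (by rw [hJdef]; exact Or.inl hm)
        have h2 : p.2 ∉ Ioo (b-z) (b-c) := fun hm => hJm (by rw [hJdef]; exact Or.inr hm)
        rw [η'2 p.2 h1 h2, zero_mul, abs_zero]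
    have s3 : (∫ p in S, (Prod.snd ⁻¹' J).indicator Pf p)
        = ∫ p in S ∩ Prod.snd ⁻¹' J, Pf p := setIntegral_indicator hJmeas
    have s4 : (∫ p in S ∩ Prod.snd ⁻¹' J, Pf p) ≤ ∫ p in V, Pf p := by
      refine setIntegral_mono_set hPfV (Filter.Eventually.of_forall (fun p => hPfnn p)) ?_
      refine HasSubset.Subset.eventuallyLE ?_
      rintro p ⟨hpS, hpJ⟩
      rw [hSdef] at hpS
      have hx1 : 0 < p.1 := hXm0.trans hpS.1.1
      have hx2 : p.1 < h := hpS.1.2.trans hXph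
      rw [hJdef] at hpJ
      rw [hVdef]
      rcases hpJ with hm | hm
      · exact Or.inl ⟨⟨hx1, hx2⟩, ⟨hc0.trans hm.1, hm.2⟩⟩
      · exact Or.inr ⟨⟨hx1, hx2⟩, ⟨hm.1, hm.2.trans hbcb⟩⟩
    have s5 : (∫ p in V, Pf p)
        = 1/(ε^2*z^2) * (∫ p in V, w p ^ 2) + ε^2 * (∫ p in V, dY w p ^ 2) := by
      have i1 : IntegrableOn (fun p => w p ^ 2) V := shape0 _ (M*M) (cw.pow 2) bW2 V hVmeas hVsub
      have i2 : IntegrableOn (fun p => dY w p ^ 2) V :=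
        shape0 _ (M*M) (cw2.pow 2) bW22 V hVmeas hVsub
      rw [hPfdef]
      rw [integral_add (i1.const_mul _) (i2.const_mul _), integral_const_mul, integral_const_mul]
    rw [s3] at s2
    linarith
  -- the side bound
  have hsideb : (∫ y in Ioo (0:ℝ) b, η y * (w (Xp, y) * dX w (Xp, y) - w (Xm, y) * dX w (Xm, y)))
      ≤ G Xp + G Xm := by
    have hip : IntegrableOn (fun y => w (Xp, y) * dX w (Xp, y)) (Ioo (0:ℝ) b) :=
      shape1p _ (M*M) (cw.mul cw1) bWW1 Xp hXpI
    have him : IntegrableOn (fun y => w (Xm, y) * dX w (Xm, y)) (Ioo (0:ℝ) b) :=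
      shape1p _ (M*M) (cw.mul cw1) bWW1 Xm hXmI
    have hipa := hip.abs
    have hima := him.abs
    have hil : IntegrableOn
        (fun y => η y * (w (Xp, y) * dX w (Xp, y) - w (Xm, y) * dX w (Xm, y))) (Ioo (0:ℝ) b) :=
      Integrable.bdd_mul (hip.sub him) (ηcont.aestronglyMeasurable.restrict)
        (Filter.Eventually.of_forall fun y => by rw [Real.norm_eq_abs]; exact ηabs y)
    have hmono : ∀ y ∈ Ioo (0:ℝ) b,
        η y * (w (Xp, y) * dX w (Xp, y) - w (Xm, y) * dX w (Xm, y))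
          ≤ |w (Xp, y) * dX w (Xp, y)| + |w (Xm, y) * dX w (Xm, y)| := by
      intro y hy
      have h1 : η y * (w (Xp, y) * dX w (Xp, y) - w (Xm, y) * dX w (Xm, y))
          ≤ |w (Xp, y) * dX w (Xp, y) - w (Xm, y) * dX w (Xm, y)| := by
        calc η y * (w (Xp, y) * dX w (Xp, y) - w (Xm, y) * dX w (Xm, y))
            ≤ |η y * (w (Xp, y) * dX w (Xp, y) - w (Xm, y) * dX w (Xm, y))| := le_abs_self _
        _ = |η y| * |w (Xp, y) * dX w (Xp, y) - w (Xm, y) * dX w (Xm, y)| := abs_mul _ _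
        _ ≤ 1 * |w (Xp, y) * dX w (Xp, y) - w (Xm, y) * dX w (Xm, y)| :=
            mul_le_mul_of_nonneg_right (ηabs y) (abs_nonneg _)
        _ = |w (Xp, y) * dX w (Xp, y) - w (Xm, y) * dX w (Xm, y)| := one_mul _
      exact h1.trans (abs_sub _ _)
    calc (∫ y in Ioo (0:ℝ) b, η y * (w (Xp, y) * dX w (Xp, y) - w (Xm, y) * dX w (Xm, y)))
        ≤ ∫ y in Ioo (0:ℝ) b, (|w (Xp, y) * dX w (Xp, y)| + |w (Xm, y) * dX w (Xm, y)|) :=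
          setIntegral_mono_on hil (hipa.add hima) measurableSet_Ioo hmono
    _ = G Xp + G Xm := integral_add hipa hima
  -- main chain over S
  have hmain : (∫ p in S, η p.2 * (dX w p ^ 2 + dY w p ^ 2))
      ≤ 4/h * I + (1/(ε^2*z^2) * (∫ p in V, w p ^ 2) + ε^2 * (∫ p in V, dY w p ^ 2)) := by
    have hsplit : (∫ p in S, η p.2 * (dX w p ^ 2 + dY w p ^ 2))
        = (∫ p in S, η p.2 * (dX w p * dX w p + w p * dX (dX w) p))
          + (∫ p in S, η p.2 * (dY w p * dY w p + w p * dY (dY w) p)) := by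
      rw [← integral_add hintA1 hintA3]
      refine setIntegral_congr_fun hSmeas (fun p hp => ?_)
      have hh0 := hharm p (hSsub hp)
      linear_combination (-(η p.2 * w p)) * hh0
    have hA3eq : (∫ p in S, η p.2 * (dY w p * dY w p + w p * dY (dY w) p))
        = -(∫ p in S, η' p.2 * (w p * dY w p)) := by linarith [hI23]
    rw [hsplit, hA3eq, hI1]
    have := add_le_add hsideb hA2bound
    linarith [hΦ]
  -- conclusion
  have hR14meas : MeasurableSet (Ioo (h/4) (3*h/4) ×ˢ Ioo z (b-z)) :=
    measurableSet_Ioo.prod measurableSet_Ioo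
  have hR14sub : Ioo (h/4) (3*h/4) ×ˢ Ioo z (b-z) ⊆ S := by
    rw [hSdef]
    exact prod_mono (Ioo_subset_Ioo hXmq.le hXpq.le) (Ioo_subset_Ioo hz0.le (by linarith))
  have step0 : (∫ p in Ioo (h/4) (3*h/4) ×ˢ Ioo z (b-z), (dX w p ^ 2 + dY w p ^ 2))
      = ∫ p in Ioo (h/4) (3*h/4) ×ˢ Ioo z (b-z), η p.2 * (dX w p ^ 2 + dY w p ^ 2) :=
    setIntegral_congr_fun hR14meas (fun p hp => by
      rw [ηone p.2 hp.2.1.le hp.2.2.le, one_mul])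
  have step1 : (∫ p in Ioo (h/4) (3*h/4) ×ˢ Ioo z (b-z), η p.2 * (dX w p ^ 2 + dY w p ^ 2))
      ≤ ∫ p in S, η p.2 * (dX w p ^ 2 + dY w p ^ 2) := by
    refine setIntegral_mono_set hintQ ?_ (HasSubset.Subset.eventuallyLE hR14sub)
    exact Filter.Eventually.of_forall (fun p => mul_nonneg (η0 p.2) (by positivity))
  rw [step0]
  refine le_trans step1 (le_trans hmain ?_)
  linarith
end
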